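/- Let d = 3 and suppose q = (q̄, q_n(q̄)) is a normalized central configuration, with q_i = (x_i, y_i, z_i). Then 0 = Σ_{i=1}^{n−1} m_i ( (x_i − x_n) DF^red_{i,y}(q̄) − (y_i − y_n) DF^red_{i,x}(q̄) ), an identity among the rows of the Jacobian matrix DF^red(q̄). -/

import Mathlib

open scoped BigOperators

noncomputable section

/-- Points in `ℝ^d`, with the Euclidean norm. -/
abbrev Pt (d : ℕ) := EuclideanSpace ℝ (Fin d)

/-- `F_i(q) = −q_i + Σ_{j ≠ i} m_j (q_j − q_i)/‖q_j − q_i‖³`. -/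
noncomputable def nbodyF {d n : ℕ} (m : Fin n → ℝ) (q : Fin n → Pt d) : Fin n → Pt d :=
  fun i => -q i + ∑ j ∈ Finset.univ.erase i, (m j / ‖q j - q i‖ ^ 3) • (q j - q i)

/-- A configuration is collision-free if all bodies occupy distinct positions. -/
def CollisionFree {d n : ℕ} (q : Fin n → Pt d) : Prop :=
  ∀ i j, i ≠ j → q i ≠ q j

/-- A normalized central configuration: collision-free, center of mass at the origin,
and `F(q) = 0`. -/
def IsNCC {d n : ℕ} (m : Fin n → ℝ) (q : Fin n → Pt d) : Prop :=
  CollisionFree q ∧ (∑ i, m i • q i) = 0 ∧ nbodyF m q = 0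

/-- Embedding of the reduced index set `{1,…,n−1}` into `{1,…,n}`. -/
def emb {n : ℕ} (i : Fin (n - 1)) : Fin n := Fin.castLE (Nat.sub_le n 1) i

/-- Extend a reduced configuration `q̄ = (q_1,…,q_{n−1})` by the position of the last body,
`q_n(q̄) = −(1/m_n) Σ_{i<n} m_i q_i`, computed from the center of mass condition. -/
noncomputable def extendConfig {d n : ℕ} (m : Fin n → ℝ) (qbar : Fin (n - 1) → Pt d) :
    Fin n → Pt d :=
  fun i => if h : (i : ℕ) < n - 1 then qbar ⟨i, h⟩
    else (-(1 / m i)) • ∑ j : Fin (n - 1), m (emb j) • qbar j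

/-- The center-of-mass reduced map `F^red_i(q̄) = F_i(q_1,…,q_{n−1},q_n(q̄))`, `i = 1,…,n−1`. -/
noncomputable def Fred {d n : ℕ} (m : Fin n → ℝ) (qbar : Fin (n - 1) → Pt d) :
    Fin (n - 1) → Pt d :=
  fun i => nbodyF m (extendConfig m qbar) (emb i)

/-- The Jacobian matrix of `F`, rows and columns indexed by (body, coordinate). -/
noncomputable def jacF {d n : ℕ} (m : Fin n → ℝ) (q : Fin n → Pt d) :
    Matrix (Fin n × Fin d) (Fin n × Fin d) ℝ :=
  fun p p' =>
    fderiv ℝ (fun q' : Fin n → Pt d => nbodyF m q' p.1 p.2) q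
      (Pi.single p'.1 (EuclideanSpace.single p'.2 (1 : ℝ)))

/-- The Jacobian matrix of `F^red`, rows and columns indexed by (body, coordinate). -/
noncomputable def jacFred {d n : ℕ} (m : Fin n → ℝ) (qbar : Fin (n - 1) → Pt d) :
    Matrix (Fin (n - 1) × Fin d) (Fin (n - 1) × Fin d) ℝ :=
  fun p p' =>
    fderiv ℝ (fun q' : Fin (n - 1) → Pt d => Fred m q' p.1 p.2) qbar
      (Pi.single p'.1 (EuclideanSpace.single p'.2 (1 : ℝ)))

/-- `0 = Σ_i m_i ((x_i − x_n) DF^red_{i,y} − (y_i − y_n) DF^red_{i,x})`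
as an identity among the rows of `DF^red(q̄)` (here `x = 0`, `y = 1`). -/
noncomputable def extCLM {n : ℕ} (m : Fin n → ℝ) (j : Fin n) :
    (Fin (n-1) → Pt 3) →L[ℝ] Pt 3 :=
  if h : (j : ℕ) < n - 1 then ContinuousLinearMap.proj ⟨(j : ℕ), h⟩
  else (-(1 / m j)) • ∑ k : Fin (n-1), m (emb k) • ContinuousLinearMap.proj k

lemma extCLM_apply {n : ℕ} (m : Fin n → ℝ) (j : Fin n) (q' : Fin (n-1) → Pt 3) :
    extCLM m j q' = extendConfig m q' j := by
  unfold extCLM extendConfig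
  split <;> simp

lemma ext_emb {n : ℕ} (m : Fin n → ℝ) (q' : Fin (n-1) → Pt 3) (i : Fin (n-1)) :
    extendConfig m q' (emb i) = q' i := by
  have h : ((emb i : Fin n) : ℕ) < n - 1 := i.isLt
  simp [extendConfig, dif_pos h, emb]

lemma sum_erase_antisymm {N : ℕ} (t : Fin N → Fin N → ℝ) (h : ∀ i j, t i j = - t j i) :
    ∑ i, ∑ j ∈ Finset.univ.erase i, t i j = 0 := by
  have key : ∀ (s : Fin N → Fin N → ℝ),
      ∑ i, ∑ j ∈ Finset.univ.erase i, s i j = ∑ i, ∑ j ∈ Finset.univ.erase i, s j i := by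
    intro s
    rw [Finset.sum_sigma', Finset.sum_sigma']
    refine Finset.sum_nbij' (fun p => ⟨p.2, p.1⟩) (fun p => ⟨p.2, p.1⟩) ?_ ?_ ?_ ?_ ?_ <;>
      simp [Finset.mem_sigma, Finset.mem_erase, ne_comm]
  have h1 : ∑ i, ∑ j ∈ Finset.univ.erase i, t i j
      = - ∑ i, ∑ j ∈ Finset.univ.erase i, t j i := by
    rw [← Finset.sum_neg_distrib]
    refine Finset.sum_congr rfl fun i _ => ?_
    rw [← Finset.sum_neg_distrib]
    exact Finset.sum_congr rfl fun j _ => h i j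
  have h2 := key t
  linarith

lemma nm1_lt {n : ℕ} (hn : 3 ≤ n) : n - 1 < n := by omega

lemma sum_fin_split {n : ℕ} (hn : 3 ≤ n) {M : Type*} [AddCommMonoid M] (f : Fin n → M) :
    ∑ k, f k = (∑ i : Fin (n-1), f (emb i)) + f ⟨n-1, nm1_lt hn⟩ := by
  have h : n - 1 + 1 = n := by omega
  rw [← Fintype.sum_equiv (finCongr h) (fun k => f (finCongr h k)) f (fun _ => rfl),
    Fin.sum_univ_castSucc]
  have e1 : ∀ i : Fin (n-1), (finCongr h) i.castSucc = emb i := fun i => by ext; simp [emb]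
  have e2 : (finCongr h) (Fin.last (n-1)) = (⟨n-1, by omega⟩ : Fin n) := by ext; simp
  simp only [e1, e2]

lemma com_zero {n : ℕ} (hn : 3 ≤ n) (m : Fin n → ℝ)
    (hm : m ⟨n-1, nm1_lt hn⟩ ≠ 0) (q' : Fin (n-1) → Pt 3) :
    ∑ k : Fin n, m k • extendConfig m q' k = 0 := by
  rw [sum_fin_split hn]
  have hL : extendConfig m q' ⟨n-1, by omega⟩
      = (-(1 / m ⟨n-1, by omega⟩)) • ∑ j : Fin (n-1), m (emb j) • q' j := by
    simp [extendConfig]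
  rw [hL]
  have : ∀ i : Fin (n-1), m (emb i) • extendConfig m q' (emb i) = m (emb i) • q' i :=
    fun i => by rw [ext_emb]
  rw [Finset.sum_congr rfl (fun i _ => this i), smul_smul]
  field_simp
  rw [neg_one_smul, add_neg_cancel]

lemma fred_eq {n : ℕ} (m : Fin n → ℝ) (i : Fin (n-1)) (v : Fin 3) (q' : Fin (n-1) → Pt 3) :
    Fred m q' i v = -(extCLM m (emb i) q' v) + ∑ j ∈ Finset.univ.erase (emb i),
      (m j / ‖extCLM m j q' - extCLM m (emb i) q'‖ ^ 3) *
        ((extCLM m j q' v - extCLM m (emb i) q' v)) := by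
  simp only [Fred, nbodyF, extCLM_apply]
  rw [PiLp.add_apply, PiLp.neg_apply, WithLp.ofLp_sum, Finset.sum_apply]
  refine congrArg₂ (· + ·) rfl (Finset.sum_congr rfl fun j hj => ?_)
  rw [PiLp.smul_apply, PiLp.sub_apply, smul_eq_mul]

lemma fred_diff {n : ℕ} (m : Fin n → ℝ) (qbar : Fin (n-1) → Pt 3)
    (hcf : ∀ i j : Fin n, i ≠ j → extendConfig m qbar i ≠ extendConfig m qbar j)
    (i : Fin (n-1)) (v : Fin 3) :
    DifferentiableAt ℝ (fun q' => Fred m q' i v) qbar := by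
  have heq : (fun q' => Fred m q' i v) = fun q' =>
      -(extCLM m (emb i) q' v) + ∑ j ∈ Finset.univ.erase (emb i),
        (m j / ‖extCLM m j q' - extCLM m (emb i) q'‖ ^ 3) *
          ((extCLM m j q' v - extCLM m (emb i) q' v)) := funext (fred_eq m i v)
  rw [heq]
  have hproj : ∀ (j : Fin n), DifferentiableAt ℝ (fun q' => extCLM m j q' v) qbar :=
    fun j => ((EuclideanSpace.proj v).comp (extCLM m j)).differentiableAt
  refine DifferentiableAt.add ((hproj (emb i)).neg) ?_
  refine DifferentiableAt.fun_sum fun j hj => ?_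
  have hjne : j ≠ emb i := (Finset.mem_erase.mp hj).1
  have hΔ : DifferentiableAt ℝ (fun q' => extCLM m j q' - extCLM m (emb i) q') qbar :=
    (extCLM m j - extCLM m (emb i)).differentiableAt
  have hne : extCLM m j qbar - extCLM m (emb i) qbar ≠ 0 := by
    rw [sub_ne_zero, extCLM_apply, extCLM_apply]
    exact hcf j (emb i) hjne
  have hnorm : DifferentiableAt ℝ (fun q' => ‖extCLM m j q' - extCLM m (emb i) q'‖) qbar :=
    hΔ.norm ℝ hne
  have hden : DifferentiableAt ℝ (fun q' => ‖extCLM m j q' - extCLM m (emb i) q'‖ ^ 3) qbar :=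
    hnorm.pow 3
  have hden0 : ‖extCLM m j qbar - extCLM m (emb i) qbar‖ ^ 3 ≠ 0 :=
    pow_ne_zero 3 (norm_ne_zero_iff.mpr hne)
  have hquot : DifferentiableAt ℝ
      (fun q' => m j / ‖extCLM m j q' - extCLM m (emb i) q'‖ ^ 3) qbar :=
    by
      simp only [div_eq_mul_inv]
      exact (hden.inv hden0).const_mul (m j)
  exact hquot.mul ((hproj j).sub (hproj (emb i)))

lemma nbody_apply {n : ℕ} (m : Fin n → ℝ) (u : Fin n → Pt 3) (k : Fin n) (v : Fin 3) :
    nbodyF m u k v = -(u k v) + ∑ j ∈ Finset.univ.erase k,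
      (m j / ‖u j - u k‖ ^ 3) * (u j v - u k v) := by
  simp only [nbodyF]
  rw [PiLp.add_apply, PiLp.neg_apply, WithLp.ofLp_sum, Finset.sum_apply]
  refine congrArg₂ (· + ·) rfl (Finset.sum_congr rfl fun j hj => ?_)
  rw [PiLp.smul_apply, PiLp.sub_apply, smul_eq_mul]

lemma mass_nbody_sum_zero {n : ℕ} (hn : 3 ≤ n) (m : Fin n → ℝ)
    (hm : m ⟨n-1, nm1_lt hn⟩ ≠ 0) (q' : Fin (n-1) → Pt 3) (v : Fin 3) :
    ∑ k : Fin n, m k * nbodyF m (extendConfig m q') k v = 0 := by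
  set u := extendConfig m q' with hu
  have hcom : ∑ k : Fin n, m k * u k v = 0 := by
    have := com_zero hn m hm q'
    have h2 : (∑ k : Fin n, m k • u k) v = (0 : Pt 3) v := by rw [this]
    rw [WithLp.ofLp_sum, Finset.sum_apply] at h2
    simpa [PiLp.smul_apply, smul_eq_mul] using h2
  have hpair : ∑ k : Fin n, ∑ j ∈ Finset.univ.erase k,
      m k * ((m j / ‖u j - u k‖ ^ 3) * (u j v - u k v)) = 0 := by
    refine sum_erase_antisymm _ fun k j => ?_
    rw [norm_sub_rev]
    ring
  calc ∑ k : Fin n, m k * nbodyF m u k v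
      = ∑ k : Fin n, (m k * (-(u k v)) + ∑ j ∈ Finset.univ.erase k,
          m k * ((m j / ‖u j - u k‖ ^ 3) * (u j v - u k v))) := by
        refine Finset.sum_congr rfl fun k _ => ?_
        rw [nbody_apply, mul_add, Finset.mul_sum]
    _ = 0 := by
        rw [Finset.sum_add_distrib, hpair, add_zero]
        simpa [neg_mul, mul_neg] using neg_eq_zero.mpr hcom

lemma angmom_zero {n : ℕ} (m : Fin n → ℝ) (u : Fin n → Pt 3) :
    ∑ k : Fin n, m k * (u k 0 * nbodyF m u k 1 - u k 1 * nbodyF m u k 0) = 0 := by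
  have key : ∀ k : Fin n, m k * (u k 0 * nbodyF m u k 1 - u k 1 * nbodyF m u k 0)
      = ∑ j ∈ Finset.univ.erase k,
          (m k * m j / ‖u j - u k‖ ^ 3) * (u k 0 * u j 1 - u k 1 * u j 0) := by
    intro k
    rw [nbody_apply, nbody_apply]
    have h0 : ∀ S1 S0 : ℝ, m k * (u k 0 * (-(u k 1) + S1) - u k 1 * (-(u k 0) + S0))
        = m k * (u k 0 * S1) - m k * (u k 1 * S0) := fun S1 S0 => by ring
    rw [h0]
    simp only [Finset.mul_sum]
    rw [← Finset.sum_sub_distrib]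
    exact Finset.sum_congr rfl fun j _ => by ring
  rw [Finset.sum_congr rfl fun k _ => key k]
  refine sum_erase_antisymm _ fun k j => ?_
  rw [norm_sub_rev]
  ring

lemma psi_zero {n : ℕ} (hn : 3 ≤ n) (m : Fin n → ℝ) (hm : ∀ i, 0 < m i)
    (q' : Fin (n-1) → Pt 3) :
    ∑ i : Fin (n-1), m (emb i) *
      ((extendConfig m q' (emb i) 0 - extendConfig m q' ⟨n-1, nm1_lt hn⟩ 0) * Fred m q' i 1 -
       (extendConfig m q' (emb i) 1 - extendConfig m q' ⟨n-1, nm1_lt hn⟩ 1) * Fred m q' i 0)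
      = 0 := by
  set u := extendConfig m q' with hu
  set L : Fin n := ⟨n-1, by omega⟩ with hL
  set G : Fin n → Fin 3 → ℝ := fun k v => nbodyF m u k v with hG
  set T : Fin n → ℝ := fun k =>
    m k * ((u k 0 - u L 0) * G k 1 - (u k 1 - u L 1) * G k 0) with hT
  have hFred : ∀ (i : Fin (n-1)) (v : Fin 3), Fred m q' i v = G (emb i) v := fun i v => rfl
  have hLHS : (∑ i : Fin (n-1), m (emb i) *
      ((u (emb i) 0 - u L 0) * Fred m q' i 1 - (u (emb i) 1 - u L 1) * Fred m q' i 0))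
      = ∑ i : Fin (n-1), T (emb i) := by
    refine Finset.sum_congr rfl fun i _ => ?_
    rw [hFred, hFred]
  rw [hLHS]
  have hTL : T L = 0 := by simp [hT]
  have hsplit := sum_fin_split hn T
  rw [← hL] at hsplit
  have hfull : ∑ k : Fin n, T k = 0 := by
    have hb0 : ∑ k : Fin n, m k * G k 0 = 0 := mass_nbody_sum_zero hn m (hm _).ne' q' 0
    have hb1 : ∑ k : Fin n, m k * G k 1 = 0 := mass_nbody_sum_zero hn m (hm _).ne' q' 1
    have hc : ∑ k : Fin n, m k * (u k 0 * G k 1 - u k 1 * G k 0) = 0 := angmom_zero m u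
    have hTk : ∀ k : Fin n, T k = m k * (u k 0 * G k 1 - u k 1 * G k 0)
        - u L 0 * (m k * G k 1) + u L 1 * (m k * G k 0) := fun k => by rw [hT]; ring
    rw [Finset.sum_congr rfl fun k _ => hTk k, Finset.sum_add_distrib,
      Finset.sum_sub_distrib, ← Finset.mul_sum, ← Finset.mul_sum, hb0, hb1, hc]
    ring
  rw [hfull, hTL, add_zero] at hsplit
  linarith

theorem stmt1 {n : ℕ} (hn : 3 ≤ n) (m : Fin n → ℝ) (hm : ∀ i, 0 < m i)
    (qbar : Fin (n - 1) → Pt 3) (hcc : IsNCC m (extendConfig m qbar)) :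
    ∀ p : Fin (n - 1) × Fin 3,
      ∑ i : Fin (n - 1), m (emb i) *
        ((qbar i 0 - extendConfig m qbar ⟨n - 1, by omega⟩ 0) * jacFred m qbar (i, 1) p -
          (qbar i 1 - extendConfig m qbar ⟨n - 1, by omega⟩ 1) * jacFred m qbar (i, 0) p) = 0 := by
  intro p
  obtain ⟨hcf, hcom, hF⟩ := hcc
  set L : Fin n := ⟨n - 1, by omega⟩ with hLdef
  set w : Fin (n-1) → Pt 3 := Pi.single p.1 (EuclideanSpace.single p.2 (1 : ℝ)) with hw
  have hFred0 : ∀ (i : Fin (n-1)) (v : Fin 3), Fred m qbar i v = 0 := by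
    intro i v
    have h1 : Fred m qbar i = 0 := by
      show nbodyF m (extendConfig m qbar) (emb i) = 0
      rw [hF]; rfl
    rw [h1]; rfl
  set D : Fin (n-1) → Fin 3 → ((Fin (n-1) → Pt 3) →L[ℝ] ℝ) :=
    fun i v => fderiv ℝ (fun q' => Fred m q' i v) qbar with hD
  have hjac : ∀ (i : Fin (n-1)) (v : Fin 3), jacFred m qbar (i, v) p = D i v w := fun i v => rfl
  have hf : ∀ (i : Fin (n-1)) (v : Fin 3),
      HasFDerivAt (fun q' => Fred m q' i v) (D i v) qbar :=
    fun i v => (fred_diff m qbar hcf i v).hasFDerivAt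
  set A : Fin (n-1) → Fin 3 → ((Fin (n-1) → Pt 3) →L[ℝ] ℝ) :=
    fun i v => (EuclideanSpace.proj v).comp (extCLM m (emb i) - extCLM m L) with hA
  have ha : ∀ (i : Fin (n-1)) (v : Fin 3),
      HasFDerivAt (fun q' => extendConfig m q' (emb i) v - extendConfig m q' L v)
        (A i v) qbar := by
    intro i v
    have heq : (fun q' : Fin (n-1) → Pt 3 =>
        extendConfig m q' (emb i) v - extendConfig m q' L v) = A i v := by
      funext q'
      simp [hA, ContinuousLinearMap.comp_apply, ContinuousLinearMap.sub_apply,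
        extCLM_apply, PiLp.sub_apply]
    rw [heq]
    exact (A i v).hasFDerivAt
  have hDsum : HasFDerivAt (fun q' => ∑ i : Fin (n-1), m (emb i) *
      ((extendConfig m q' (emb i) 0 - extendConfig m q' L 0) * Fred m q' i 1 -
       (extendConfig m q' (emb i) 1 - extendConfig m q' L 1) * Fred m q' i 0))
      (∑ i : Fin (n-1), m (emb i) •
        (((extendConfig m qbar (emb i) 0 - extendConfig m qbar L 0) • D i 1
            + Fred m qbar i 1 • A i 0)
          - ((extendConfig m qbar (emb i) 1 - extendConfig m qbar L 1) • D i 0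
            + Fred m qbar i 0 • A i 1))) qbar := by
    refine HasFDerivAt.fun_sum fun i _ => ?_
    exact (((ha i 0).mul (hf i 1)).sub ((ha i 1).mul (hf i 0))).const_mul (m (emb i))
  have h0 : HasFDerivAt (fun q' => ∑ i : Fin (n-1), m (emb i) *
      ((extendConfig m q' (emb i) 0 - extendConfig m q' L 0) * Fred m q' i 1 -
       (extendConfig m q' (emb i) 1 - extendConfig m q' L 1) * Fred m q' i 0))
      (0 : (Fin (n-1) → Pt 3) →L[ℝ] ℝ) qbar := by
    have heq : (fun q' => ∑ i : Fin (n-1), m (emb i) *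
        ((extendConfig m q' (emb i) 0 - extendConfig m q' L 0) * Fred m q' i 1 -
         (extendConfig m q' (emb i) 1 - extendConfig m q' L 1) * Fred m q' i 0))
        = fun _ : Fin (n-1) → Pt 3 => (0 : ℝ) :=
      funext fun q' => psi_zero hn m hm q'
    rw [heq]
    exact hasFDerivAt_const 0 qbar
  have huniq := h0.unique hDsum
  have happ := congrArg (fun T : (Fin (n-1) → Pt 3) →L[ℝ] ℝ => T w) huniq
  simp only [ContinuousLinearMap.zero_apply, ContinuousLinearMap.sum_apply,
    ContinuousLinearMap.smul_apply, ContinuousLinearMap.sub_apply,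
    ContinuousLinearMap.add_apply, hFred0, zero_smul, add_zero, smul_eq_mul] at happ
  have hgoal : ∑ i : Fin (n-1), m (emb i) *
      ((qbar i 0 - extendConfig m qbar L 0) * D i 1 w -
        (qbar i 1 - extendConfig m qbar L 1) * D i 0 w) = 0 := by
    rw [← happ.symm] at *
    rw [← happ]
    refine Finset.sum_congr rfl fun i _ => ?_
    rw [ext_emb]
  rw [Finset.sum_congr rfl fun i _ => by rw [hjac i 1, hjac i 0]]
  exact hgoal
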